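/- arXiv:2307.05622 — 2 statements merged into one kernel-verified Lean document; each statement's English description precedes it below -/
import Mathlib

section
/- As z → 0 in ℂ ∖ (−∞,0], one has d₁(z) = e^{−βπi}·(1 + 2iβ·z^{1/2} − 2β²·z − (2i(β + 2β³)/3)·z^{3/2} + O(z²)) and d₂(z) = e^{βπi}·(1 − 2iβ·z^{1/2} − 2β²·z + (2i(β + 2β³)/3)·z^{3/2} + O(z²)), where z^{1/2} and z^{3/2} are principal branches. -/
open Complex Filter Topology Set Asymptotics

/-- `β = ln(1-γ)/(2πi)`. -/
noncomputable def beta (γ : ℝ) : ℂ := Complex.log (1 - γ) / (2 * Real.pi * Complex.I)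

/-- `λ(ζ) = ((ζ-i)/(ζ+i))^β`, principal branch. -/
noncomputable def lam (γ : ℝ) (ζ : ℂ) : ℂ := ((ζ - Complex.I) / (ζ + Complex.I)) ^ (beta γ)

/-- `d₁(z) = λ(z^{1/2})`, principal branch of the square root. -/
noncomputable def d1 (γ : ℝ) (z : ℂ) : ℂ := lam γ (z ^ ((1 : ℂ)/2))

/-- `d₂(z) = λ(-z^{1/2})`, principal branch of the square root. -/
noncomputable def d2 (γ : ℝ) (z : ℂ) : ℂ := lam γ (-(z ^ ((1 : ℂ)/2)))

/-!
For `0 < re w` the points `1 + i w` and `1 - i w` lie in the upper and lower half planes, so their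
arguments differ by less than `2π` and `log ((w - i)/(w + i)) = log (1 + i w) - log (1 - i w) - π i`
exactly. Hence `λ(w) = e^{-βπi} exp (β (log (1 + i w) - log (1 - i w)))`, and `λ(-w)` is its
reciprocal. The Taylor expansions of `log (1 ± x)` give
`log (1 + i w) - log (1 - i w) = 2i (w - w³/3) + O(w⁴)`, and exponentiating yields a cubic Taylor
polynomial with `O(w⁴)` remainder. On the slit plane `w = z^{1/2}` has positive real part and tends
to `0`, and `w⁴ = z²`.
-/

open scoped Real

namespace Complex

lemma log_one_add_sub_log_one_sub_isBigO :
    (fun x : ℂ => log (1 + x) - log (1 - x) - (2 * x + 2 * x ^ 3 / 3)) =O[𝓝 0] (· ^ 4) := by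
  have hneg : Tendsto (fun x : ℂ => -x) (𝓝 0) (𝓝 0) := by
    simpa using tendsto_neg (0 : ℂ)
  have hlog := log_sub_logTaylor_isBigO 3
  have hlog_neg : (fun x => log (1 + -x) - logTaylor (3 + 1) (-x)) =O[𝓝 0]
      (fun x => (-x) ^ (3 + 1)) :=
    hlog.comp_tendsto hneg
  refine (hlog.sub (hlog_neg.congr_right fun x => by ring)).congr (fun x => ?_) (fun x => rfl)
  simp only [logTaylor, Finset.sum_range_succ, Finset.sum_range_zero, ← sub_eq_add_neg]
  push_cast
  ring

lemma exp_sub_exp_isBigO {α : Type*} {l : Filter α} {f g h : α → ℂ} {c : ℂ}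
    (hg : Tendsto g l (𝓝 c)) (hfg : (fun x => f x - g x) =O[l] h) (hh : Tendsto h l (𝓝 0)) :
    (fun x => exp (f x) - exp (g x)) =O[l] h := by
  have hexp_one : (fun x => exp (f x - g x) - 1) =O[l] h := by
    have := (exp_sub_sum_range_isBigO_pow 1).comp_tendsto (hfg.trans_tendsto hh)
    exact (this.trans (hfg.congr_left fun x => (pow_one _).symm)).congr_left (fun x => by simp)
  have hexp_g : (fun x => exp (g x)) =O[l] (fun _ => (1 : ℂ)) :=
    ((continuous_exp.tendsto c).comp hg).isBigO_one ℂ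
  refine (hexp_g.mul hexp_one).congr (fun x => ?_) (fun x => one_mul _)
  rw [mul_sub, ← exp_add, mul_one, add_sub_cancel]

lemma exp_linear_add_cubic_isBigO (a d : ℂ) :
    (fun w : ℂ => exp (a * w + d * w ^ 3) -
      (1 + a * w + a ^ 2 / 2 * w ^ 2 + (a ^ 3 / 6 + d) * w ^ 3)) =O[𝓝 0] (· ^ 4) := by
  set q : ℂ → ℂ := fun w => a * w + d * w ^ 3
  have hq : q =O[𝓝 0] id := by
    have : Continuous fun w : ℂ => a + d * w ^ 2 := by fun_prop
    refine (((this.tendsto 0).isBigO_one ℂ).mul (isBigO_refl id _)).congr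
      (fun w => by simp only [q, id]; ring) (fun w => one_mul _)
  have hexp := ((exp_sub_sum_range_isBigO_pow 4).comp_tendsto
    (hq.trans_tendsto tendsto_id)).trans (hq.pow 4)
  set r : ℂ → ℂ := fun w =>
    a * d + a ^ 2 * d / 2 * w + d ^ 2 / 2 * w ^ 2 + a * d ^ 2 / 2 * w ^ 3 + d ^ 3 / 6 * w ^ 5
  have hr : Continuous r := by fun_prop
  have hrem : (fun w => id w ^ 4 * r w) =O[𝓝 0] (fun w => id w ^ 4) :=
    ((isBigO_refl _ _).mul ((hr.tendsto 0).isBigO_one ℂ)).congr_right fun w => mul_one _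
  refine (hexp.add hrem).congr (fun w => ?_) (fun w => rfl)
  simp only [Function.comp_apply, id, q, r, Finset.sum_range_succ, Finset.sum_range_zero,
    Nat.factorial]
  push_cast
  ring

lemma exp_mul_log_one_add_sub_log_one_sub_I_mul_isBigO (b : ℂ) :
    (fun w : ℂ => exp (b * (log (1 + I * w) - log (1 - I * w))) -
      (1 + 2 * I * b * w - 2 * b ^ 2 * w ^ 2 - (2 * I * (b + 2 * b ^ 3) / 3) * w ^ 3))
      =O[𝓝 0] (· ^ 4) := by
  have hIw : Tendsto (fun w : ℂ => I * w) (𝓝 0) (𝓝 0) := by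
    simpa using (continuous_const_mul I).tendsto 0
  have hL : (fun w => b * (log (1 + I * w) - log (1 - I * w)) -
      b * (2 * (I * w) + 2 * (I * w) ^ 3 / 3)) =O[𝓝 0] (· ^ 4) :=
    ((log_one_add_sub_log_one_sub_isBigO.comp_tendsto hIw).const_mul_left b).congr
      (fun w => by simp only [Function.comp_apply]; ring)
      (fun w => by simp [mul_pow, I_pow_four])
  have hg : Continuous fun w : ℂ => b * (2 * (I * w) + 2 * (I * w) ^ 3 / 3) := by fun_prop
  have hexp := exp_sub_exp_isBigO (hg.tendsto 0) hL
    (by simpa using (continuous_pow 4).tendsto (0 : ℂ))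
  refine (hexp.add (exp_linear_add_cubic_isBigO (2 * I * b) (-(2 * I * b / 3)))).congr
    (fun w => ?_) (fun w => rfl)
  have : b * (2 * (I * w) + 2 * (I * w) ^ 3 / 3) = 2 * I * b * w + -(2 * I * b / 3) * w ^ 3 := by
    linear_combination (2 / 3 * I * b * w ^ 3) * I_sq
  rw [this]
  linear_combination (-2 * b ^ 2 * w ^ 2 - 4 / 3 * I * b ^ 3 * w ^ 3) * I_sq

lemma log_neg_div_of_im_pos_of_im_neg {p q : ℂ} (hp : 0 < p.im) (hq : q.im < 0) :
    log (-(p / q)) = log p - log q - π * I := by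
  have hp0 : p ≠ 0 := fun h => by simp [h] at hp
  have hq0 : q ≠ 0 := fun h => by simp [h] at hq
  have harg_p : 0 ≤ arg p := arg_nonneg_iff.2 hp.le
  have harg_q : arg q < 0 := arg_neg_iff.2 hq
  have hexp : exp (log p - log q - π * I) = -(p / q) := by
    rw [exp_sub, exp_sub, exp_log hp0, exp_log hq0, exp_pi_mul_I]
    field_simp
  rw [← hexp, log_exp] <;>
    simp only [sub_im, log_im, mul_im, ofReal_re, ofReal_im, I_re, I_im] <;>
    linarith [arg_le_pi p, neg_pi_lt_arg q]

lemma arg_neg_div_lt_pi_of_im_pos_of_im_neg {p q : ℂ} (hp : 0 < p.im) (hq : q.im < 0) :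
    arg (-(p / q)) < π := by
  rw [← log_im, log_neg_div_of_im_pos_of_im_neg hp hq]
  simp only [sub_im, log_im, mul_im, ofReal_re, ofReal_im, I_re, I_im]
  linarith [arg_le_pi p, neg_pi_lt_arg q]

lemma sub_I_div_add_I_eq_neg (w : ℂ) : (w - I) / (w + I) = -((1 + I * w) / (1 - I * w)) := by
  have hnum : 1 + I * w = I * (w - I) := by linear_combination I_sq
  have hden : 1 - I * w = -I * (w + I) := by linear_combination I_sq
  rw [hnum, hden, neg_mul, div_neg, neg_neg, mul_div_mul_left _ _ I_ne_zero]

lemma re_cpow_one_half_pos {z : ℂ} (hz : z ∈ slitPlane) : 0 < (z ^ ((1 : ℂ) / 2)).re := by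
  rw [one_div, cpow_inv_two_re, Real.sqrt_pos]
  rcases mem_slitPlane_iff.1 hz with hre | him
  · linarith [norm_nonneg z]
  · linarith [abs_re_lt_norm.2 him, neg_abs_le z.re]

lemma cpow_one_half_sq (z : ℂ) : (z ^ ((1 : ℂ) / 2)) ^ 2 = z := by
  rw [one_div, cpow_ofNat_inv_pow]

lemma cpow_one_half_cube (z : ℂ) : (z ^ ((1 : ℂ) / 2)) ^ 3 = z ^ ((3 : ℂ) / 2) := by
  rw [← cpow_ofNat_mul]
  norm_num

lemma isBigO_comp_cpow_one_half {F : ℂ → ℂ} (hF : F =O[𝓝 0] (· ^ 4)) :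
    (fun z => F (z ^ ((1 : ℂ) / 2))) =O[𝓝 0] (· ^ 2) := by
  have hsqrt : Tendsto (fun z : ℂ => z ^ ((1 : ℂ) / 2)) (𝓝 0) (𝓝 0) := by
    have := (continuousAt_cpow_const_of_re_pos (z := 0) (Or.inl (by simp))
      (by norm_num : 0 < ((1 : ℂ) / 2).re)).tendsto
    rwa [zero_cpow (by norm_num)] at this
  refine (hF.comp_tendsto hsqrt).congr_right fun z => ?_
  rw [Function.comp_apply, show 4 = 2 * 2 from rfl, pow_mul, cpow_one_half_sq]

end Complex

section Lambda

variable (γ : ℝ) {w : ℂ}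

lemma lam_eq_exp (hw : 0 < w.re) :
    lam γ w = exp (-(beta γ) * π * I) * exp (beta γ * (log (1 + I * w) - log (1 - I * w))) := by
  have hp : 0 < (1 + I * w).im := by simpa using hw
  have hq : (1 - I * w).im < 0 := by simpa using hw
  have hpq : -((1 + I * w) / (1 - I * w)) ≠ 0 :=
    neg_ne_zero.2 (div_ne_zero (fun h => by simp [h] at hp) (fun h => by simp [h] at hq))
  rw [lam, sub_I_div_add_I_eq_neg w, cpow_def_of_ne_zero hpq,
    log_neg_div_of_im_pos_of_im_neg hp hq, ← exp_add]
  congr 1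
  ring

lemma lam_neg_eq_exp (hw : 0 < w.re) :
    lam γ (-w) = exp (beta γ * π * I) * exp (beta γ * (log (1 + I * -w) - log (1 - I * -w))) := by
  have hp : 0 < (1 + I * w).im := by simpa using hw
  have hq : (1 - I * w).im < 0 := by simpa using hw
  have hratio : (-w - I) / (-w + I) = ((w - I) / (w + I))⁻¹ := by
    rw [inv_div, ← neg_div_neg_eq]
    ring_nf
  have harg : arg ((w - I) / (w + I)) ≠ π := by
    rw [sub_I_div_add_I_eq_neg w]
    exact (arg_neg_div_lt_pi_of_im_pos_of_im_neg hp hq).ne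
  rw [lam, hratio, inv_cpow _ _ harg, ← lam, lam_eq_exp γ hw, mul_inv, ← exp_neg, ← exp_neg]
  congr 2
  · ring
  · rw [mul_neg, sub_neg_eq_add, ← sub_eq_add_neg]
    ring

end Lambda

theorem gap_tacnode_d1_d2_asymptotics_at_zero_general (γ : ℝ) :
    (fun z : ℂ => d1 γ z -
        Complex.exp (-(beta γ) * Real.pi * Complex.I) *
          (1 + 2 * Complex.I * beta γ * z ^ ((1:ℂ)/2) - 2 * (beta γ)^2 * z
            - (2 * Complex.I * (beta γ + 2 * (beta γ)^3) / 3) * z ^ ((3:ℂ)/2)))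
      =O[𝓝[{z : ℂ | ¬(z.re ≤ 0 ∧ z.im = 0)}] (0:ℂ)] (fun z : ℂ => z^2) ∧
    (fun z : ℂ => d2 γ z -
        Complex.exp ((beta γ) * Real.pi * Complex.I) *
          (1 - 2 * Complex.I * beta γ * z ^ ((1:ℂ)/2) - 2 * (beta γ)^2 * z
            + (2 * Complex.I * (beta γ + 2 * (beta γ)^3) / 3) * z ^ ((3:ℂ)/2)))
      =O[𝓝[{z : ℂ | ¬(z.re ≤ 0 ∧ z.im = 0)}] (0:ℂ)] (fun z : ℂ => z^2) := by
  have hS : {z : ℂ | ¬(z.re ≤ 0 ∧ z.im = 0)} = slitPlane := by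
    ext z
    rw [mem_slitPlane_iff, ← not_le, ← not_and_or]
    rfl
  have hpos : ∀ᶠ z in 𝓝[slitPlane] (0 : ℂ), 0 < (z ^ ((1 : ℂ) / 2)).re :=
    eventually_nhdsWithin_of_forall fun z hz => re_cpow_one_half_pos hz
  have hF := exp_mul_log_one_add_sub_log_one_sub_I_mul_isBigO (beta γ)
  have hneg : Tendsto (fun w : ℂ => -w) (𝓝 0) (𝓝 0) := by simpa using tendsto_neg (0 : ℂ)
  have hF_neg := (hF.comp_tendsto hneg).congr_right (g₂ := (· ^ 4))
    fun w => Even.neg_pow (by decide) w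
  rw [hS]
  constructor
  · refine (((isBigO_comp_cpow_one_half hF).const_mul_left (exp (-(beta γ) * π * I))).mono
      nhdsWithin_le_nhds).congr' ?_ EventuallyEq.rfl
    filter_upwards [hpos] with z hz
    rw [cpow_one_half_sq, cpow_one_half_cube, d1, lam_eq_exp γ hz]
    ring
  · refine (((isBigO_comp_cpow_one_half hF_neg).const_mul_left (exp (beta γ * π * I))).mono
      nhdsWithin_le_nhds).congr' ?_ EventuallyEq.rfl
    filter_upwards [hpos] with z hz
    rw [Function.comp_apply, neg_sq, Odd.neg_pow (by decide), cpow_one_half_sq,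
      cpow_one_half_cube, d2, lam_neg_eq_exp γ hz]
    ring

/-- As `z → 0` in `ℂ ∖ (-∞,0]`,
`d₁(z) = e^{-βπi}(1 + 2iβ z^{1/2} - 2β² z - (2i(β+2β³)/3) z^{3/2} + O(z²))` and
`d₂(z) = e^{βπi}(1 - 2iβ z^{1/2} - 2β² z + (2i(β+2β³)/3) z^{3/2} + O(z²))`. -/
theorem gap_tacnode_d1_d2_asymptotics_at_zero (γ : ℝ) (hγ : γ ∈ Set.Ioo (0:ℝ) 1) :
    (fun z : ℂ => d1 γ z -
        Complex.exp (-(beta γ) * Real.pi * Complex.I) *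
          (1 + 2 * Complex.I * beta γ * z ^ ((1:ℂ)/2) - 2 * (beta γ)^2 * z
            - (2 * Complex.I * (beta γ + 2 * (beta γ)^3) / 3) * z ^ ((3:ℂ)/2)))
      =O[𝓝[{z : ℂ | ¬(z.re ≤ 0 ∧ z.im = 0)}] (0:ℂ)] (fun z : ℂ => z^2) ∧
    (fun z : ℂ => d2 γ z -
        Complex.exp ((beta γ) * Real.pi * Complex.I) *
          (1 - 2 * Complex.I * beta γ * z ^ ((1:ℂ)/2) - 2 * (beta γ)^2 * z
            + (2 * Complex.I * (beta γ + 2 * (beta γ)^3) / 3) * z ^ ((3:ℂ)/2)))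
      =O[𝓝[{z : ℂ | ¬(z.re ≤ 0 ∧ z.im = 0)}] (0:ℂ)] (fun z : ℂ => z^2) :=
  gap_tacnode_d1_d2_asymptotics_at_zero_general γ
end

section
/- Define the 2×2 matrix-valued function N̂₁(z) = [[1,0],[−2β,1]] · (1/√2)·diag(z^{−1/4}, z^{1/4}) · [[1,i],[i,1]] · diag(d₁(z), d₂(z)) for z ∈ ℂ ∖ (−∞,0], with principal branches of z^{±1/4}. Then: (a) N̂₁ is analytic in ℂ ∖ (−∞,0]; (b) for every x < −1 the boundary values satisfy N̂₁,₊(x) = N̂₁,₋(x)·[[0,1],[−1,0]], and for every x with −1 < x < 0 they satisfy N̂₁,₊(x) = N̂₁,₋(x)·[[0, 1−γ],[1/(γ−1), 0]]; (c) as z → ∞ in ℂ ∖ (−∞,0], √2·N̂₁(z)·([[1,i],[i,1]])^{−1}·diag(z^{1/4}, z^{−1/4}) = I + O(z^{−1}). -/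
open Complex Filter Topology Set Asymptotics Matrix

/-- `ℂ ∖ (-∞,0]`. -/
def slitPlane0 : Set ℂ := {z : ℂ | ¬(z.re ≤ 0 ∧ z.im = 0)}

/-- `N̂₁(z) = [[1,0],[-2β,1]] · (1/√2)·diag(z^{-1/4}, z^{1/4}) · [[1,i],[i,1]] · diag(d₁(z), d₂(z))`. -/
noncomputable def Nhat1 (γ : ℝ) (z : ℂ) : Matrix (Fin 2) (Fin 2) ℂ :=
  !![1, 0; -2 * beta γ, 1] *
    (((1 : ℂ) / Real.sqrt 2) • Matrix.diagonal ![z ^ (-(1:ℂ)/4), z ^ ((1:ℂ)/4)]) *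
    !![1, Complex.I; Complex.I, 1] *
    Matrix.diagonal ![d1 γ z, d2 γ z]


/-!
On the slit plane `√z` has positive real part, so the Cayley transform `cayley ζ = (ζ-i)/(ζ+i)`
maps `√z` into the lower half plane and `-√z` into the upper one; since
`cayley (-ζ) = (cayley ζ)⁻¹`, this gives analyticity of `d₁, d₂` and `d₂ = d₁⁻¹`.

Jumps. Over `x < 0` the powers `z^{∓1/4}` have boundary values in the ratio `∓i`, while `√z` tends to
`±i√(-x)`, whose Cayley images `r = (√(-x)-1)/(√(-x)+1)` and `r⁻¹` are approached from the lower
half plane. A matrix identity reduces both jump relations to `d₁,₊ · d₁,₋ · k = 1`. For `x < -1`,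
`r > 0`, `q ↦ q^β` is continuous at `r` and `r⁻¹`, and `k = 1`. For `-1 < x < 0`, `r < 0` lies on the
cut of `q^β`, whose boundary value from below is `(-q)^β e^{-iπβ}`; so `k = e^{2πiβ} = 1 - γ`.

Infinity. With `t = z^{-1/2}`, `d₁ = g t` and `d₂ = g (-t)` for `g t = ((1-it)/(1+it))^β`, analytic at
`0` with `g 0 = 1` and `g' 0 = -2iβ`. The entries of the normalized matrix minus `I` are linear
combinations of `g t + g (-t) - 2`, `t (g t - g (-t))` and `t⁻¹ (g t - g (-t) - 2 g'(0) t)`, each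
`O(t²) = O(z⁻¹)` by the Taylor expansion of `g` to third order.
-/

open scoped Real

section OddEvenParts

variable {𝕜 E : Type*} [NontriviallyNormedField 𝕜] [NormedAddCommGroup E]

theorem Asymptotics.IsBigO.comp_neg_pow {g : 𝕜 → E} {n : ℕ}
    (h : g =O[𝓝 0] fun t => t ^ n) : (fun t => g (-t)) =O[𝓝 0] fun t => t ^ n :=
  (h.comp_tendsto (continuous_neg.tendsto' (0 : 𝕜) 0 neg_zero)).trans
    (isBigO_of_le _ fun t => by simp)

variable [NormedSpace 𝕜 E] {f : 𝕜 → E}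

theorem Asymptotics.isBigO_smul_const {α : Type*} {l : Filter α} (g : α → 𝕜) (c : E) :
    (fun t => g t • c) =O[l] g :=
  IsBigO.of_bound ‖c‖ (Eventually.of_forall fun t => by rw [norm_smul, mul_comm])

theorem FormalMultilinearSeries.partialSum_three (p : FormalMultilinearSeries 𝕜 𝕜 E) (y : 𝕜) :
    p.partialSum 3 y = p.coeff 0 + y • p.coeff 1 + y ^ 2 • p.coeff 2 := by
  simp [FormalMultilinearSeries.partialSum, Finset.sum_range_succ]

theorem HasFPowerSeriesAt.isBigO_sub_partialSum_pow_of_zero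
    {p : FormalMultilinearSeries 𝕜 𝕜 E} (hf : HasFPowerSeriesAt f p 0) (n : ℕ) :
    (fun t => f t - p.partialSum n t) =O[𝓝 0] fun t => t ^ n := by
  refine isBigO_norm_right.1 ?_
  simpa only [zero_add, norm_pow] using hf.isBigO_sub_partialSum_pow n

theorem AnalyticAt.isBigO_add_comp_neg_sub (hf : AnalyticAt 𝕜 f 0) :
    (fun t => f t + f (-t) - (2 : 𝕜) • f 0) =O[𝓝 0] fun t => t ^ 2 := by
  obtain ⟨p, hp⟩ := hf
  have hR := hp.isBigO_sub_partialSum_pow_of_zero 3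
  have hc0 : p.coeff 0 = f 0 := by simpa using hp.coeff_zero (fun _ => 1)
  have h32 : (fun t : 𝕜 => t ^ 3) =O[𝓝 0] fun t => t ^ 2 :=
    (isLittleO_pow_pow (by norm_num)).isBigO
  refine (((hR.add hR.comp_neg_pow).trans h32).add
    (isBigO_smul_const (fun t : 𝕜 => t ^ 2) ((2 : 𝕜) • p.coeff 2))).congr_left fun t => ?_
  simp only [p.partialSum_three, hc0, neg_sq, neg_smul, smul_smul]
  module

theorem AnalyticAt.isBigO_sub_comp_neg_sub (hf : AnalyticAt 𝕜 f 0) :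
    (fun t => f t - f (-t) - (2 * t) • deriv f 0) =O[𝓝 0] fun t => t ^ 3 := by
  obtain ⟨p, hp⟩ := hf
  have hR := hp.isBigO_sub_partialSum_pow_of_zero 3
  have hc1 : deriv f 0 = p.coeff 1 := hp.deriv
  refine (hR.sub hR.comp_neg_pow).congr_left fun t => ?_
  simp only [p.partialSum_three, hc1, neg_sq, neg_smul]
  module

theorem AnalyticAt.isBigO_smul_sub_comp_neg (hf : AnalyticAt 𝕜 f 0) :
    (fun t => t • (f t - f (-t))) =O[𝓝 0] fun t => t ^ 2 := by
  have h31 : (fun t : 𝕜 => t ^ 3) =O[𝓝 0] fun t => t :=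
    (isLittleO_pow_id (by norm_num)).isBigO
  have hodd : (fun t => f t - f (-t)) =O[𝓝 0] fun t => t :=
    ((hf.isBigO_sub_comp_neg_sub.trans h31).add
      (isBigO_smul_const (fun t : 𝕜 => t) ((2 : 𝕜) • deriv f 0))).congr_left
      fun t => by module
  simpa [sq] using (isBigO_refl (fun t : 𝕜 => t) _).smul hodd

theorem AnalyticAt.isBigO_inv_smul_sub_comp_neg_sub (hf : AnalyticAt 𝕜 f 0) :
    (fun t => t⁻¹ • (f t - f (-t) - (2 * t) • deriv f 0)) =O[𝓝 0] fun t => t ^ 2 := by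
  refine ((isBigO_refl (fun t : 𝕜 => t⁻¹) _).smul hf.isBigO_sub_comp_neg_sub).trans ?_
  refine (isBigO_refl (fun t : 𝕜 => t ^ 2) _).congr_left fun t => ?_
  rcases eq_or_ne t 0 with rfl | ht
  · simp
  · rw [smul_eq_mul, eq_inv_mul_iff_mul_eq₀ ht]
    ring

end OddEvenParts

section ComplexPowers

theorem slitPlane0_eq_slitPlane : slitPlane0 = slitPlane := by
  ext z
  simp only [slitPlane0, mem_ofPred_eq, mem_slitPlane_iff, not_and_or, not_le]

theorem cpow_eq_neg_cpow_mul_exp_of_im_pos {z : ℂ} (hz : 0 < z.im) (c : ℂ) :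
    z ^ c = (-z) ^ c * exp (π * I * c) := by
  have hz0 : z ≠ 0 := fun h => by simp [h] at hz
  rw [cpow_def_of_ne_zero hz0, cpow_def_of_ne_zero (neg_ne_zero.2 hz0), ← exp_add]
  simp only [Complex.log, norm_neg, arg_neg_eq_arg_sub_pi_of_im_pos hz]
  push_cast
  ring_nf

theorem cpow_eq_neg_cpow_mul_exp_of_im_neg {z : ℂ} (hz : z.im < 0) (c : ℂ) :
    z ^ c = (-z) ^ c * exp (-(π * I * c)) := by
  have hz0 : z ≠ 0 := fun h => by simp [h] at hz
  rw [cpow_def_of_ne_zero hz0, cpow_def_of_ne_zero (neg_ne_zero.2 hz0), ← exp_add]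
  simp only [Complex.log, norm_neg, arg_neg_eq_arg_add_pi_of_im_neg hz]
  push_cast
  ring_nf

theorem tendsto_cpow_nhdsWithin_im_pos {x : ℂ} (hx : -x ∈ slitPlane) (c : ℂ) :
    Tendsto (· ^ c) (𝓝[{z | 0 < z.im}] x) (𝓝 ((-x) ^ c * exp (π * I * c))) := by
  have hcont : ContinuousAt (fun z : ℂ => (-z) ^ c * exp (π * I * c)) x :=
    ((continuousAt_cpow_const hx).comp continuousAt_neg).mul continuousAt_const
  refine (hcont.tendsto.mono_left nhdsWithin_le_nhds).congr' ?_
  filter_upwards [self_mem_nhdsWithin] with z hz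
  exact (cpow_eq_neg_cpow_mul_exp_of_im_pos hz c).symm

theorem tendsto_cpow_nhdsWithin_im_neg {x : ℂ} (hx : -x ∈ slitPlane) (c : ℂ) :
    Tendsto (· ^ c) (𝓝[{z | z.im < 0}] x) (𝓝 ((-x) ^ c * exp (-(π * I * c)))) := by
  have hcont : ContinuousAt (fun z : ℂ => (-z) ^ c * exp (-(π * I * c))) x :=
    ((continuousAt_cpow_const hx).comp continuousAt_neg).mul continuousAt_const
  refine (hcont.tendsto.mono_left nhdsWithin_le_nhds).congr' ?_
  filter_upwards [self_mem_nhdsWithin] with z hz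
  exact (cpow_eq_neg_cpow_mul_exp_of_im_neg hz c).symm

theorem exp_pi_mul_I_mul (c : ℂ) :
    exp (π * I * c) = exp (2 * π * I * c) * exp (-(π * I * c)) := by
  rw [← exp_add]
  ring_nf

theorem cpow_mul_inv_cpow {y : ℂ} (hy : y ∈ slitPlane) (c : ℂ) : y ^ c * y⁻¹ ^ c = 1 := by
  rw [inv_cpow _ _ (slitPlane_arg_ne_pi hy),
    mul_inv_cancel₀ (cpow_ne_zero_iff.2 (Or.inl (slitPlane_ne_zero hy)))]

theorem re_cpow_half_pos {z : ℂ} (hz : z ∈ slitPlane) : 0 < (z ^ (1 / 2 : ℂ)).re := by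
  rw [one_div, cpow_inv_two_re, Real.sqrt_pos]
  rcases mem_slitPlane_iff.1 hz with h | h
  · linarith [norm_nonneg z]
  · linarith [abs_re_lt_norm.2 h, neg_abs_le z.re]

theorem neg_ofReal_cpow_half {x : ℝ} (hx : x ≤ 0) : (-(x : ℂ)) ^ (1 / 2 : ℂ) = √(-x) := by
  rw [← ofReal_neg, Real.sqrt_eq_rpow, ofReal_cpow (neg_nonneg.2 hx)]
  push_cast
  rfl

theorem tendsto_cpow_half_nhdsWithin_im_pos {x : ℝ} (hx : x < 0) :
    Tendsto (· ^ (1 / 2 : ℂ)) (𝓝[{z | 0 < z.im}] (x : ℂ)) (𝓝 (√(-x) * I)) := by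
  have h := tendsto_cpow_nhdsWithin_im_pos (neg_ofReal_mem_slitPlane.2 hx) (1 / 2)
  rwa [neg_ofReal_cpow_half hx.le, show (π : ℂ) * I * (1 / 2) = π / 2 * I by ring,
    exp_pi_div_two_mul_I] at h

theorem tendsto_cpow_half_nhdsWithin_im_neg {x : ℝ} (hx : x < 0) :
    Tendsto (· ^ (1 / 2 : ℂ)) (𝓝[{z | z.im < 0}] (x : ℂ)) (𝓝 (-(√(-x) * I))) := by
  have h := tendsto_cpow_nhdsWithin_im_neg (neg_ofReal_mem_slitPlane.2 hx) (1 / 2)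
  rwa [neg_ofReal_cpow_half hx.le, show -((π : ℂ) * I * (1 / 2)) = -π / 2 * I by ring,
    exp_neg_pi_div_two_mul_I, mul_neg] at h

theorem cpow_half_inv_sq (z : ℂ) : ((z ^ (1 / 2 : ℂ))⁻¹) ^ 2 = z⁻¹ := by
  rw [inv_pow, one_div, cpow_ofNat_inv_pow]

theorem tendsto_cpow_half_inv_cobounded :
    Tendsto (fun z : ℂ => (z ^ (1 / 2 : ℂ))⁻¹) (Bornology.cobounded ℂ) (𝓝 0) := by
  have h := (Real.continuous_sqrt.tendsto _).comp (tendsto_inv₀_cobounded (α := ℂ)).norm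
  rw [norm_zero, Real.sqrt_zero] at h
  refine tendsto_zero_iff_norm_tendsto_zero.2 (h.congr fun z => ?_)
  rw [Function.comp_apply, ← cpow_half_inv_sq, norm_pow, Real.sqrt_sq (norm_nonneg _)]

theorem tendsto_ofReal_add_mul_I_nhdsWithin (x : ℝ) :
    Tendsto (fun ε : ℝ => (x : ℂ) + ε * I) (𝓝[>] 0) (𝓝[{z | 0 < z.im}] (x : ℂ)) := by
  refine tendsto_nhdsWithin_iff.2 ⟨?_, eventually_nhdsWithin_of_forall fun ε hε => by simpa⟩
  exact ((by fun_prop : Continuous fun ε : ℝ => (x : ℂ) + ε * I).tendsto' 0 _ (by simp)).mono_left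
    nhdsWithin_le_nhds

theorem tendsto_ofReal_sub_mul_I_nhdsWithin (x : ℝ) :
    Tendsto (fun ε : ℝ => (x : ℂ) - ε * I) (𝓝[>] 0) (𝓝[{z | z.im < 0}] (x : ℂ)) := by
  refine tendsto_nhdsWithin_iff.2 ⟨?_, eventually_nhdsWithin_of_forall fun ε hε => by simpa⟩
  exact ((by fun_prop : Continuous fun ε : ℝ => (x : ℂ) - ε * I).tendsto' 0 _ (by simp)).mono_left
    nhdsWithin_le_nhds

end ComplexPowers

section Cayley

noncomputable def cayley (ζ : ℂ) : ℂ := (ζ - I) / (ζ + I)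

theorem cayley_im (ζ : ℂ) : (cayley ζ).im = -2 * ζ.re / normSq (ζ + I) := by
  simp only [cayley, div_im, sub_im, sub_re, add_im, add_re, I_im, I_re]
  ring

theorem add_I_ne_zero_of_re_ne_zero {ζ : ℂ} (h : ζ.re ≠ 0) : ζ + I ≠ 0 :=
  fun h' => h (by simpa using congrArg re h')

theorem ofReal_mul_I_add_I_ne_zero {s : ℝ} (hs : s ≠ -1) : (s : ℂ) * I + I ≠ 0 :=
  fun h => hs (by simpa [eq_neg_iff_add_eq_zero] using congrArg im h)

theorem cayley_im_neg {ζ : ℂ} (h : 0 < ζ.re) : (cayley ζ).im < 0 := by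
  rw [cayley_im]
  exact div_neg_of_neg_of_pos (by linarith) (normSq_pos.2 (add_I_ne_zero_of_re_ne_zero h.ne'))

theorem cayley_im_pos {ζ : ℂ} (h : ζ.re < 0) : 0 < (cayley ζ).im := by
  rw [cayley_im]
  exact div_pos (by linarith) (normSq_pos.2 (add_I_ne_zero_of_re_ne_zero h.ne))

theorem cayley_mem_slitPlane {ζ : ℂ} (h : ζ.re ≠ 0) : cayley ζ ∈ slitPlane := by
  refine mem_slitPlane_iff.2 (Or.inr ?_)
  rcases h.lt_or_gt with h | h
  exacts [(cayley_im_pos h).ne', (cayley_im_neg h).ne]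

theorem cayley_neg (ζ : ℂ) : cayley (-ζ) = (cayley ζ)⁻¹ := by
  rw [cayley, cayley, inv_div, ← neg_div_neg_eq]
  ring_nf

theorem cayley_ofReal_mul_I (s : ℝ) : cayley (s * I) = ((s - 1) / (s + 1) : ℝ) := by
  rw [cayley, show (s : ℂ) * I - I = (s - 1) * I by ring,
    show (s : ℂ) * I + I = (s + 1) * I by ring, mul_div_mul_right _ _ I_ne_zero]
  push_cast
  rfl

theorem analyticAt_cayley {ζ : ℂ} (h : ζ + I ≠ 0) : AnalyticAt ℂ cayley ζ := by
  unfold cayley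
  fun_prop (disch := exact h)

theorem analyticAt_lam (γ : ℝ) {ζ : ℂ} (h : ζ.re ≠ 0) : AnalyticAt ℂ (lam γ) ζ :=
  (analyticAt_cayley (add_I_ne_zero_of_re_ne_zero h)).cpow analyticAt_const
    (cayley_mem_slitPlane h)

theorem analyticOnNhd_d1 (γ : ℝ) : AnalyticOnNhd ℂ (d1 γ) slitPlane :=
  fun _ hz => AnalyticAt.comp (f := fun w : ℂ => w ^ (1 / 2 : ℂ))
    (analyticAt_lam γ (re_cpow_half_pos hz).ne') (analyticAt_id.cpow analyticAt_const hz)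

theorem analyticOnNhd_d2 (γ : ℝ) : AnalyticOnNhd ℂ (d2 γ) slitPlane :=
  fun _ hz => AnalyticAt.comp (f := fun w : ℂ => -w ^ (1 / 2 : ℂ))
    (analyticAt_lam γ (by simpa using (re_cpow_half_pos hz).ne'))
    (analyticAt_id.cpow analyticAt_const hz).neg

theorem d2_eq_inv_d1 (γ : ℝ) {z : ℂ} (hz : z ∈ slitPlane) : d2 γ z = (d1 γ z)⁻¹ := by
  change cayley (-_) ^ beta γ = (cayley _ ^ beta γ)⁻¹
  rw [cayley_neg,
    inv_cpow _ _ (slitPlane_arg_ne_pi (cayley_mem_slitPlane (re_cpow_half_pos hz).ne'))]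

/-- `cayley (i √(-x))`, the limit of `cayley √z` as `z → x < 0` from above. It is negative
exactly when `-1 < x`. -/
noncomputable def cayleyBoundary (x : ℝ) : ℝ := (√(-x) - 1) / (√(-x) + 1)

theorem tendsto_cayley_cpow_half_nhdsWithin_im_pos {x : ℝ} (hx : x < 0) :
    Tendsto (fun z => cayley (z ^ (1 / 2 : ℂ))) (𝓝[{z | 0 < z.im}] (x : ℂ))
      (𝓝[{q | q.im < 0}] (cayleyBoundary x : ℂ)) := by
  refine tendsto_nhdsWithin_iff.2 ⟨?_, eventually_nhdsWithin_of_forall fun z hz =>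
    cayley_im_neg (re_cpow_half_pos (mem_slitPlane_iff.2 (Or.inr (ne_of_gt hz))))⟩
  have hne := ofReal_mul_I_add_I_ne_zero (s := √(-x)) (by linarith [Real.sqrt_nonneg (-x)])
  rw [cayleyBoundary, ← cayley_ofReal_mul_I]
  exact (analyticAt_cayley hne).continuousAt.tendsto.comp (tendsto_cpow_half_nhdsWithin_im_pos hx)

theorem tendsto_cayley_cpow_half_nhdsWithin_im_neg {x : ℝ} (hx : x < 0) (hx1 : x ≠ -1) :
    Tendsto (fun z => cayley (z ^ (1 / 2 : ℂ))) (𝓝[{z | z.im < 0}] (x : ℂ))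
      (𝓝[{q | q.im < 0}] (cayleyBoundary x : ℂ)⁻¹) := by
  refine tendsto_nhdsWithin_iff.2 ⟨?_, eventually_nhdsWithin_of_forall fun z hz =>
    cayley_im_neg (re_cpow_half_pos (mem_slitPlane_iff.2 (Or.inr (ne_of_lt hz))))⟩
  have hs : -√(-x) ≠ -1 := fun h =>
    hx1 (by linarith [(Real.sqrt_eq_one (x := -x)).1 (neg_inj.1 h)])
  have hne : -((√(-x) : ℂ) * I) + I ≠ 0 := by
    simpa using ofReal_mul_I_add_I_ne_zero hs
  rw [cayleyBoundary, ← cayley_ofReal_mul_I, ← cayley_neg]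
  exact (analyticAt_cayley hne).continuousAt.tendsto.comp (tendsto_cpow_half_nhdsWithin_im_neg hx)

end Cayley

section NhatForm

noncomputable def nhatForm (b a₁ a₂ δ₁ δ₂ : ℂ) : Matrix (Fin 2) (Fin 2) ℂ :=
  !![1, 0; -2 * b, 1] * (((1 : ℂ) / Real.sqrt 2) • diagonal ![a₁, a₂]) * !![1, I; I, 1] *
    diagonal ![δ₁, δ₂]

theorem Nhat1_eq_nhatForm (γ : ℝ) (z : ℂ) :
    Nhat1 γ z = nhatForm (beta γ) (z ^ (-(1 : ℂ) / 4)) (z ^ ((1 : ℂ) / 4)) (d1 γ z) (d2 γ z) :=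
  rfl

theorem nhatForm_eq (b a₁ a₂ δ₁ δ₂ : ℂ) : nhatForm b a₁ a₂ δ₁ δ₂ = ((1 : ℂ) / Real.sqrt 2) •
    !![a₁ * δ₁, I * a₁ * δ₂; (I * a₂ - 2 * b * a₁) * δ₁, (a₂ - 2 * I * b * a₁) * δ₂] := by
  ext i j
  fin_cases i <;> fin_cases j <;>
    simp [nhatForm, Matrix.mul_apply, Matrix.diagonal_apply, vecMul, vecHead, vecTail,
      dotProduct] <;> ring

theorem continuous_nhatForm (b : ℂ) :
    Continuous fun p : ℂ × ℂ × ℂ × ℂ => nhatForm b p.1 p.2.1 p.2.2.1 p.2.2.2 := by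
  unfold nhatForm
  fun_prop

theorem nhatForm_jump {b a₁ a₂ δ δ' k : ℂ} (h : δ * δ' * k = 1) :
    nhatForm b (-I * a₁) (I * a₂) δ δ⁻¹ = nhatForm b a₁ a₂ δ' δ'⁻¹ * !![0, k; -k⁻¹, 0] := by
  have hk : k ≠ 0 := right_ne_zero_of_mul_eq_one h
  have hδ' : δ' ≠ 0 := right_ne_zero_of_mul (left_ne_zero_of_mul_eq_one h)
  obtain rfl : δ = (δ' * k)⁻¹ := eq_inv_of_mul_eq_one_left (by rw [← mul_assoc, h])
  ext i j
  fin_cases i <;> fin_cases j <;>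
    simp [nhatForm_eq, Matrix.mul_apply, Fin.sum_univ_two] <;> field_simp <;> grind [I_sq]

theorem inv_one_I_I_one :
    (!![1, I; I, 1] : Matrix (Fin 2) (Fin 2) ℂ)⁻¹ = !![1 / 2, -I / 2; -I / 2, 1 / 2] := by
  refine Matrix.inv_eq_right_inv ?_
  ext i j
  fin_cases i <;> fin_cases j <;> simp [Matrix.mul_apply] <;> grind [I_sq]

theorem sqrt_two_smul_nhatForm_mul_sub_one {b a₁ a₂ δ₁ δ₂ t : ℂ} (ht : t ≠ 0)
    (h₁₂ : a₁ * a₂ = 1) (h₁₁ : a₁ * a₁ = t) :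
    (Real.sqrt 2 : ℂ) • nhatForm b a₁ a₂ δ₁ δ₂ * (!![1, I; I, 1])⁻¹ * diagonal ![a₂, a₁] - 1 =
      (δ₁ + δ₂ - 2) • !![1 / 2, 0; -b, 1 / 2] + (t * (δ₁ - δ₂)) • !![0, -I / 2; 0, I * b] +
        (t⁻¹ * (δ₁ - δ₂ - 2 * t * (-2 * I * b))) • !![0, 0; I / 2, 0] := by
  subst h₁₁
  have ha₁ : a₁ ≠ 0 := left_ne_zero_of_mul ht
  obtain rfl : a₂ = a₁⁻¹ := eq_inv_of_mul_eq_one_right h₁₂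
  rw [inv_one_I_I_one, nhatForm_eq]
  ext i j
  fin_cases i <;> fin_cases j <;> simp [Matrix.vecMul_diagonal] <;> field_simp <;> grind [I_sq]

theorem analyticOnNhd_Nhat1_apply (γ : ℝ) (i j : Fin 2) :
    AnalyticOnNhd ℂ (fun z : ℂ => Nhat1 γ z i j) slitPlane0 := by
  rw [slitPlane0_eq_slitPlane]
  intro z hz
  have := analyticOnNhd_d1 γ z hz
  have := analyticOnNhd_d2 γ z hz
  have := analyticAt_id.cpow (analyticAt_const (v := -(1 : ℂ) / 4)) hz
  have := analyticAt_id.cpow (analyticAt_const (v := (1 : ℂ) / 4)) hz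
  simp only [Nhat1_eq_nhatForm, nhatForm_eq]
  fin_cases i <;> fin_cases j <;>
    simp only [Fin.zero_eta, Fin.mk_one, Fin.isValue, Matrix.smul_apply, of_apply, cons_val',
      cons_val_zero, cons_val_one, cons_val_fin_one, smul_eq_mul] <;> fun_prop

end NhatForm

section Jumps

theorem tendsto_Nhat1 (γ : ℝ) {l : Filter ℂ} (hl : ∀ᶠ z in l, z ∈ slitPlane) {A B δ : ℂ}
    (hA : Tendsto (· ^ (-(1 : ℂ) / 4)) l (𝓝 A)) (hB : Tendsto (· ^ ((1 : ℂ) / 4)) l (𝓝 B))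
    (hδ : Tendsto (d1 γ) l (𝓝 δ)) (hδ0 : δ ≠ 0) :
    Tendsto (Nhat1 γ) l (𝓝 (nhatForm (beta γ) A B δ δ⁻¹)) := by
  refine (((continuous_nhatForm _).tendsto _).comp
    (hA.prodMk_nhds (hB.prodMk_nhds (hδ.prodMk_nhds (hδ.inv₀ hδ0))))).congr' ?_
  filter_upwards [hl] with z hz
  simp [Nhat1_eq_nhatForm, d2_eq_inv_d1 γ hz]

theorem Nhat1_jump (γ : ℝ) {x : ℝ} (hx : x < 0) (hx1 : x ≠ -1) {δ δ' k : ℂ}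
    (hk : δ * δ' * k = 1)
    (hδ : Tendsto (· ^ beta γ) (𝓝[{q | q.im < 0}] (cayleyBoundary x : ℂ)) (𝓝 δ))
    (hδ' : Tendsto (· ^ beta γ) (𝓝[{q | q.im < 0}] (cayleyBoundary x : ℂ)⁻¹) (𝓝 δ')) :
    ∃ Np Nm : Matrix (Fin 2) (Fin 2) ℂ,
      Tendsto (fun ε : ℝ => Nhat1 γ ((x : ℂ) + ε * I)) (𝓝[>] (0 : ℝ)) (𝓝 Np) ∧
      Tendsto (fun ε : ℝ => Nhat1 γ ((x : ℂ) - ε * I)) (𝓝[>] (0 : ℝ)) (𝓝 Nm) ∧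
      Np = Nm * !![0, k; -k⁻¹, 0] := by
  have hx' := neg_ofReal_mem_slitPlane.2 hx
  have hδ0 : δ ≠ 0 := left_ne_zero_of_mul (left_ne_zero_of_mul_eq_one hk)
  have hδ0' : δ' ≠ 0 := right_ne_zero_of_mul (left_ne_zero_of_mul_eq_one hk)
  have hup : ∀ᶠ z in 𝓝[{z | 0 < z.im}] (x : ℂ), z ∈ slitPlane :=
    eventually_nhdsWithin_of_forall fun z hz => mem_slitPlane_iff.2 (Or.inr (ne_of_gt hz))
  have hdown : ∀ᶠ z in 𝓝[{z | z.im < 0}] (x : ℂ), z ∈ slitPlane :=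
    eventually_nhdsWithin_of_forall fun z hz => mem_slitPlane_iff.2 (Or.inr (ne_of_lt hz))
  refine ⟨_, _, (tendsto_Nhat1 γ hup (tendsto_cpow_nhdsWithin_im_pos hx' _)
      (tendsto_cpow_nhdsWithin_im_pos hx' _)
      (hδ.comp (tendsto_cayley_cpow_half_nhdsWithin_im_pos hx)) hδ0).comp
      (tendsto_ofReal_add_mul_I_nhdsWithin x),
    (tendsto_Nhat1 γ hdown (tendsto_cpow_nhdsWithin_im_neg hx' _)
      (tendsto_cpow_nhdsWithin_im_neg hx' _)
      (hδ'.comp (tendsto_cayley_cpow_half_nhdsWithin_im_neg hx hx1)) hδ0').comp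
      (tendsto_ofReal_sub_mul_I_nhdsWithin x), ?_⟩
  rw [exp_pi_mul_I_mul, show 2 * (π : ℂ) * I * (-1 / 4) = -π / 2 * I by ring,
    exp_neg_pi_div_two_mul_I, exp_pi_mul_I_mul (1 / 4),
    show 2 * (π : ℂ) * I * (1 / 4) = π / 2 * I by ring, exp_pi_div_two_mul_I,
    mul_left_comm _ (-I), mul_left_comm _ I]
  exact nhatForm_jump hk

theorem exp_two_pi_I_mul_beta {γ : ℝ} (hγ : γ ≠ 1) : exp (2 * π * I * beta γ) = 1 - γ := by
  rw [beta, mul_div_cancel₀ _ (by simp [Real.pi_ne_zero, I_ne_zero])]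
  exact exp_log (sub_ne_zero.2 (by exact_mod_cast hγ.symm))

theorem Nhat1_jump_of_lt_neg_one (γ : ℝ) {x : ℝ} (hx : x < -1) :
    ∃ Np Nm : Matrix (Fin 2) (Fin 2) ℂ,
      Tendsto (fun ε : ℝ => Nhat1 γ ((x : ℂ) + ε * I)) (𝓝[>] (0 : ℝ)) (𝓝 Np) ∧
      Tendsto (fun ε : ℝ => Nhat1 γ ((x : ℂ) - ε * I)) (𝓝[>] (0 : ℝ)) (𝓝 Nm) ∧
      Np = Nm * !![0, 1; -1, 0] := by
  have hs : 1 < √(-x) := (Real.lt_sqrt zero_le_one).2 (by linarith)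
  have hr : 0 < cayleyBoundary x := div_pos (by linarith) (by linarith)
  have hr' : (cayleyBoundary x : ℂ) ∈ slitPlane := ofReal_mem_slitPlane.2 hr
  have hr'' : (cayleyBoundary x : ℂ)⁻¹ ∈ slitPlane := by
    rw [← ofReal_inv]
    exact ofReal_mem_slitPlane.2 (inv_pos.2 hr)
  simpa only [inv_one] using Nhat1_jump γ (by linarith) (by linarith) (k := 1)
    (by rw [mul_one]; exact cpow_mul_inv_cpow hr' _)
    ((continuousAt_cpow_const hr').tendsto.mono_left nhdsWithin_le_nhds)
    ((continuousAt_cpow_const hr'').tendsto.mono_left nhdsWithin_le_nhds)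

theorem Nhat1_jump_of_neg_one_lt (γ : ℝ) (hγ : γ ≠ 1) {x : ℝ} (hx1 : -1 < x) (hx : x < 0) :
    ∃ Np Nm : Matrix (Fin 2) (Fin 2) ℂ,
      Tendsto (fun ε : ℝ => Nhat1 γ ((x : ℂ) + ε * I)) (𝓝[>] (0 : ℝ)) (𝓝 Np) ∧
      Tendsto (fun ε : ℝ => Nhat1 γ ((x : ℂ) - ε * I)) (𝓝[>] (0 : ℝ)) (𝓝 Nm) ∧
      Np = Nm * !![0, 1 - (γ : ℂ); ((γ : ℂ) - 1)⁻¹, 0] := by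
  have hs : √(-x) < 1 := (Real.sqrt_lt' one_pos).2 (by linarith)
  have hr : cayleyBoundary x < 0 := div_neg_of_neg_of_pos (by linarith) (by positivity)
  have hr' : -(cayleyBoundary x : ℂ) ∈ slitPlane := neg_ofReal_mem_slitPlane.2 hr
  have hr'' : -(cayleyBoundary x : ℂ)⁻¹ ∈ slitPlane := by
    rw [← ofReal_inv]
    exact neg_ofReal_mem_slitPlane.2 (inv_lt_zero.2 hr)
  have hk : (-(cayleyBoundary x : ℂ)) ^ beta γ * exp (-(π * I * beta γ)) *
      ((-(cayleyBoundary x : ℂ)⁻¹) ^ beta γ * exp (-(π * I * beta γ))) * (1 - γ) = 1 := by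
    rw [neg_inv, mul_mul_mul_comm, cpow_mul_inv_cpow hr', one_mul,
      ← exp_two_pi_I_mul_beta hγ, ← exp_add, ← exp_add]
    convert exp_zero using 2
    ring
  have := Nhat1_jump γ hx (by linarith) hk (tendsto_cpow_nhdsWithin_im_neg hr' _)
    (tendsto_cpow_nhdsWithin_im_neg hr'' _)
  rwa [neg_inv, neg_sub] at this

end Jumps

section Infinity

/-- `λ (1 / t)` for `t ≠ 0`, extended analytically to `t = 0`. -/
noncomputable def lamInf (γ : ℝ) (t : ℂ) : ℂ := ((1 - I * t) / (1 + I * t)) ^ beta γ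

theorem lam_inv_eq_lamInf (γ : ℝ) {t : ℂ} (ht : t ≠ 0) : lam γ t⁻¹ = lamInf γ t := by
  rw [lam, lamInf, show t⁻¹ - I = (1 - I * t) * t⁻¹ by field_simp,
    show t⁻¹ + I = (1 + I * t) * t⁻¹ by field_simp, mul_div_mul_right _ _ (inv_ne_zero ht)]

theorem analyticAt_lamInf (γ : ℝ) : AnalyticAt ℂ (lamInf γ) 0 :=
  (by fun_prop (disch := simp) : AnalyticAt ℂ (fun t : ℂ => (1 - I * t) / (1 + I * t)) 0).cpow
    analyticAt_const (by simp)

theorem lamInf_zero (γ : ℝ) : lamInf γ 0 = 1 := by simp [lamInf]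

theorem deriv_lamInf_zero (γ : ℝ) : deriv (lamInf γ) 0 = -2 * I * beta γ := by
  have h : HasDerivAt (fun t : ℂ => (1 - I * t) / (1 + I * t)) (-2 * I) 0 :=
    ((((hasDerivAt_id (0 : ℂ)).const_mul I).const_sub 1).div
      (((hasDerivAt_id (0 : ℂ)).const_mul I).const_add 1) (by simp)).congr_deriv
      (by simp only [id_eq, mul_zero, add_zero, sub_zero, mul_one, one_pow, div_one]; ring)
  rw [show lamInf γ = fun t => ((1 - I * t) / (1 + I * t)) ^ beta γ from rfl,
    (h.cpow_const (by simp)).deriv]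
  simp only [mul_zero, sub_zero, add_zero, div_one, one_cpow, mul_one]
  ring

theorem d1_eq_lamInf (γ : ℝ) {z : ℂ} (hz : z ≠ 0) : d1 γ z = lamInf γ (z ^ (1 / 2 : ℂ))⁻¹ := by
  rw [← lam_inv_eq_lamInf γ (inv_ne_zero (cpow_ne_zero_iff.2 (Or.inl hz))), inv_inv, d1]

theorem d2_eq_lamInf (γ : ℝ) {z : ℂ} (hz : z ≠ 0) :
    d2 γ z = lamInf γ (-(z ^ (1 / 2 : ℂ))⁻¹) := by
  rw [← lam_inv_eq_lamInf γ (neg_ne_zero.2 (inv_ne_zero (cpow_ne_zero_iff.2 (Or.inl hz)))),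
    inv_neg, inv_inv, d2]

theorem isBigO_sqrt_two_smul_Nhat1_mul_sub_one (γ : ℝ) (i j : Fin 2) :
    (fun z : ℂ =>
        ((Real.sqrt 2 : ℂ) • (Nhat1 γ z) * (!![1, I; I, 1])⁻¹ *
            diagonal ![z ^ ((1 : ℂ) / 4), z ^ (-(1 : ℂ) / 4)] - 1) i j)
      =O[Bornology.cobounded ℂ ⊓ 𝓟 slitPlane0] fun z : ℂ => z⁻¹ := by
  set l := Bornology.cobounded ℂ ⊓ 𝓟 slitPlane0
  set t : ℂ → ℂ := fun z => (z ^ (1 / 2 : ℂ))⁻¹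
  have hl : ∀ᶠ z in l, z ≠ 0 := mem_inf_of_right (mem_principal.2 fun z hz =>
    slitPlane_ne_zero (slitPlane0_eq_slitPlane ▸ hz))
  have ht : Tendsto t l (𝓝 0) := tendsto_cpow_half_inv_cobounded.mono_left inf_le_left
  have hO {f : ℂ → ℂ} (hf : f =O[𝓝 0] fun t => t ^ 2) : (f ∘ t) =O[l] fun z : ℂ => z⁻¹ :=
    (hf.comp_tendsto ht).congr_right cpow_half_inv_sq
  have hg := analyticAt_lamInf γ
  refine (((hO hg.isBigO_add_comp_neg_sub).const_mul_left (!![1 / 2, 0; -beta γ, 1 / 2] i j)).add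
    (((hO hg.isBigO_smul_sub_comp_neg).const_mul_left (!![0, -I / 2; 0, I * beta γ] i j)).add
      ((hO hg.isBigO_inv_smul_sub_comp_neg_sub).const_mul_left (!![0, 0; I / 2, 0] i j)))).congr'
    ?_ EventuallyEq.rfl
  filter_upwards [hl] with z hz
  have h₁₂ : z ^ (-(1 : ℂ) / 4) * z ^ ((1 : ℂ) / 4) = 1 := by
    rw [← cpow_add _ _ hz]
    norm_num
  have h₁₁ : z ^ (-(1 : ℂ) / 4) * z ^ (-(1 : ℂ) / 4) = t z := by
    rw [← cpow_add _ _ hz, show (-1 / 4 + -1 / 4 : ℂ) = -(1 / 2) by norm_num, cpow_neg]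
  rw [Nhat1_eq_nhatForm, sqrt_two_smul_nhatForm_mul_sub_one
      (inv_ne_zero (cpow_ne_zero_iff.2 (Or.inl hz))) h₁₂ h₁₁, d1_eq_lamInf γ hz, d2_eq_lamInf γ hz]
  simp only [Function.comp, lamInf_zero, deriv_lamInf_zero, Matrix.add_apply, Matrix.smul_apply,
    smul_eq_mul]
  ring

end Infinity

/-- (a) `N̂₁` is analytic in `ℂ ∖ (-∞,0]`; (b) jump relations on `(-∞,-1)` and `(-1,0)`;
(c) `√2 · N̂₁(z) · [[1,i],[i,1]]⁻¹ · diag(z^{1/4}, z^{-1/4}) = I + O(z⁻¹)` as `z → ∞`. -/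
theorem gap_tacnode_Nhat1_RH_problem (γ : ℝ) (hγ : γ ∈ Set.Ioo (0:ℝ) 1) :
    (∀ i j : Fin 2, AnalyticOnNhd ℂ (fun z : ℂ => Nhat1 γ z i j) slitPlane0) ∧
    (∀ x : ℝ, x < -1 →
      ∃ Np Nm : Matrix (Fin 2) (Fin 2) ℂ,
        Tendsto (fun ε : ℝ => Nhat1 γ ((x:ℂ) + ε * Complex.I)) (𝓝[>] (0:ℝ)) (𝓝 Np) ∧
        Tendsto (fun ε : ℝ => Nhat1 γ ((x:ℂ) - ε * Complex.I)) (𝓝[>] (0:ℝ)) (𝓝 Nm) ∧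
        Np = Nm * !![0, 1; -1, 0]) ∧
    (∀ x : ℝ, -1 < x → x < 0 →
      ∃ Np Nm : Matrix (Fin 2) (Fin 2) ℂ,
        Tendsto (fun ε : ℝ => Nhat1 γ ((x:ℂ) + ε * Complex.I)) (𝓝[>] (0:ℝ)) (𝓝 Np) ∧
        Tendsto (fun ε : ℝ => Nhat1 γ ((x:ℂ) - ε * Complex.I)) (𝓝[>] (0:ℝ)) (𝓝 Nm) ∧
        Np = Nm * !![0, 1 - (γ:ℂ); ((γ:ℂ) - 1)⁻¹, 0]) ∧
    (∀ i j : Fin 2,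
      (fun z : ℂ =>
          ((Real.sqrt 2 : ℂ) • (Nhat1 γ z) * (!![1, Complex.I; Complex.I, 1])⁻¹ *
              Matrix.diagonal ![z ^ ((1:ℂ)/4), z ^ (-(1:ℂ)/4)] - 1) i j)
        =O[(Bornology.cobounded ℂ) ⊓ Filter.principal slitPlane0] (fun z : ℂ => z⁻¹)) :=
  ⟨analyticOnNhd_Nhat1_apply γ, fun _ hx => Nhat1_jump_of_lt_neg_one γ hx,
    fun _ hx1 hx => Nhat1_jump_of_neg_one_lt γ hγ.2.ne hx1 hx,
    isBigO_sqrt_two_smul_Nhat1_mul_sub_one γ⟩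
end
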